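/- arXiv:2411.08197 — 3 statements merged into one kernel-verified Lean document; each statement's English description precedes it below -/
import Mathlib

section
/- Let X ∈ ℝ^{M×N} and Y ∈ ℝ^{M×N} have full column rank N ≤ M, so that C_X = (1/M)XᵀX and C_Y = (1/M)YᵀY are positive definite. Set K_X = (1/M) X C_X⁻¹ Xᵀ, K_Y = (1/M) Y C_Y⁻¹ Yᵀ, C_{XY} = (1/M)XᵀY, and Φ = C_X^{-1/2} C_{XY} C_Y^{-1/2}, whose singular values ρ₁ ≥ … ≥ ρ_N are the canonical correlations between X and Y. Then Tr(K_X K_Y) = Σ_{i=1}^N ρ_i², Tr(K_X²) = Tr(K_Y²) = N, and consequently Tr(K_X K_Y)/√(Tr(K_X²) Tr(K_Y²)) = (1/N) Σ_{i=1}^N ρ_i². -/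
/-! `K_X = X C_X⁻¹ ((1/M) Xᵀ)` with `((1/M) Xᵀ) X = C_X`, so `K_X` is idempotent and cyclicity of
the trace gives `Tr K_X² = Tr K_X = Tr (C_X⁻¹ C_X) = N`, and likewise for `K_Y`. Cyclicity also
turns `Tr (K_X K_Y)` into `Tr (C_X⁻¹ C_XY C_Y⁻¹ C_XYᵀ)`, which is `Tr (ΦᵀΦ)` because the square
roots are symmetric; this is the sum of the eigenvalues `ρ_i²` of `ΦᵀΦ`. -/

open Matrix

namespace Matrix

open scoped ComplexOrder

theorem isHermitian_transpose_mul_self {m n α : Type*} [Fintype m] [NonUnitalCommSemiring α]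
    [StarRing α] [TrivialStar α] (A : Matrix m n α) : (Aᵀ * A).IsHermitian := by
  rw [IsHermitian, conjTranspose_eq_transpose_of_trivial, transpose_mul, transpose_transpose]

/-- The positive semidefinite square root of a positive semidefinite matrix
(the definition of `Matrix.PosSemidef.sqrt` in Mathlib of December 2024). -/
noncomputable def PosSemidef.sqrt {n 𝕜 : Type*} [Fintype n] [DecidableEq n] [RCLike 𝕜]
    {A : Matrix n n 𝕜} (hA : A.PosSemidef) : Matrix n n 𝕜 :=
  hA.1.eigenvectorUnitary.1 * diagonal ((↑) ∘ (√·) ∘ hA.1.eigenvalues) *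
  (star hA.1.eigenvectorUnitary : Matrix n n 𝕜)

end Matrix

namespace Matrix

variable {m n α : Type*} [Fintype m] [Fintype n]

section CommRing

variable [CommRing α]

theorem isIdempotentElem_mul_nonsing_inv_mul [DecidableEq n] {A : Matrix m n α}
    {B : Matrix n m α} {C : Matrix n n α} (hBA : B * A = C) (hC : IsUnit C.det) :
    IsIdempotentElem (A * C⁻¹ * B) := by
  calc A * C⁻¹ * B * (A * C⁻¹ * B) = A * (C⁻¹ * (B * A) * C⁻¹) * B := by
        simp only [Matrix.mul_assoc]
    _ = A * C⁻¹ * B := by rw [hBA, nonsing_inv_mul C hC, Matrix.one_mul]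

theorem trace_mul_nonsing_inv_mul [DecidableEq n] {A : Matrix m n α} {B : Matrix n m α}
    {C : Matrix n n α} (hBA : B * A = C) (hC : IsUnit C.det) :
    trace (A * C⁻¹ * B) = Fintype.card n := by
  rw [trace_mul_cycle, hBA, mul_nonsing_inv C hC, trace_one]

theorem trace_mul_self_mul_nonsing_inv_mul [DecidableEq n] {A : Matrix m n α}
    {B : Matrix n m α} {C : Matrix n n α} (hBA : B * A = C) (hC : IsUnit C.det) :
    trace (A * C⁻¹ * B * (A * C⁻¹ * B)) = Fintype.card n := by
  rw [(isIdempotentElem_mul_nonsing_inv_mul hBA hC).eq, trace_mul_nonsing_inv_mul hBA hC]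

theorem trace_mul_mul_mul_mul_mul_mul (A₁ A₂ : Matrix m n α) (B₁ B₂ : Matrix n m α)
    (C₁ C₂ : Matrix n n α) :
    trace (A₁ * C₁ * B₁ * (A₂ * C₂ * B₂)) = trace (C₁ * (B₁ * A₂) * C₂ * (B₂ * A₁)) := by
  simp only [Matrix.mul_assoc]
  rw [trace_mul_comm A₁]
  simp only [Matrix.mul_assoc]

theorem trace_transpose_mul_self_nonsing_inv_mul_mul_nonsing_inv [DecidableEq n]
    {S T : Matrix n n α} (hS : S.IsSymm) (hT : T.IsSymm) (D : Matrix n n α) :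
    trace ((S⁻¹ * D * T⁻¹)ᵀ * (S⁻¹ * D * T⁻¹)) = trace ((S * S)⁻¹ * D * (T * T)⁻¹ * Dᵀ) := by
  simp only [transpose_mul, transpose_nonsing_inv, hS.eq, hT.eq, Matrix.mul_inv_rev,
    Matrix.mul_assoc]
  rw [trace_mul_comm T⁻¹]
  simp only [Matrix.mul_assoc]
  rw [trace_mul_comm Dᵀ]
  simp only [Matrix.mul_assoc]

end CommRing

namespace PosSemidef

open scoped ComplexOrder

variable [DecidableEq n] {𝕜 : Type*} [RCLike 𝕜] {A : Matrix n n 𝕜}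

theorem isHermitian_sqrt (hA : A.PosSemidef) : hA.sqrt.IsHermitian := by
  simp [PosSemidef.sqrt, IsHermitian, conjTranspose_mul, Matrix.mul_assoc, star_eq_conjTranspose,
    Function.comp_def, Pi.star_def, RCLike.star_def]

theorem sqrt_mul_self (hA : A.PosSemidef) : hA.sqrt * hA.sqrt = A := by
  have hU : (star hA.1.eigenvectorUnitary : Matrix n n 𝕜) * hA.1.eigenvectorUnitary.1 = 1 :=
    Unitary.star_mul_self_of_mem hA.1.eigenvectorUnitary.2
  conv_rhs => rw [hA.1.spectral_theorem, Unitary.conjStarAlgAut_apply]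
  simp only [PosSemidef.sqrt, Matrix.mul_assoc]
  rw [← Matrix.mul_assoc (star _) _ _, hU, Matrix.one_mul,
    ← Matrix.mul_assoc (diagonal _) (diagonal _), diagonal_mul_diagonal]
  congr 3
  funext i
  simp [← RCLike.ofReal_mul, Real.mul_self_sqrt (hA.eigenvalues_nonneg i)]

end PosSemidef

end Matrix

theorem cca_mean_squared_canonical_correlations_general
    {M N : ℕ}
    (X Y : Matrix (Fin M) (Fin N) ℝ)
    (CX CY : Matrix (Fin N) (Fin N) ℝ)
    (hCX : CX = (1 / M : ℝ) • (Xᵀ * X)) (hCY : CY = (1 / M : ℝ) • (Yᵀ * Y))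
    (hCXpd : CX.PosDef) (hCYpd : CY.PosDef)
    (KX KY : Matrix (Fin M) (Fin M) ℝ)
    (hKX : KX = (1 / M : ℝ) • (X * CX⁻¹ * Xᵀ))
    (hKY : KY = (1 / M : ℝ) • (Y * CY⁻¹ * Yᵀ))
    (CXY : Matrix (Fin N) (Fin N) ℝ) (hCXY : CXY = (1 / M : ℝ) • (Xᵀ * Y))
    (Φ : Matrix (Fin N) (Fin N) ℝ)
    (hΦ : Φ = (hCXpd.posSemidef.sqrt)⁻¹ * CXY * (hCYpd.posSemidef.sqrt)⁻¹)
    (ρ : Fin N → ℝ)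
    (hρ : ∀ i, ρ i ^ 2 = (Matrix.isHermitian_transpose_mul_self Φ).eigenvalues i) :
    (KX * KY).trace = ∑ i, ρ i ^ 2 ∧
    (KX * KX).trace = (N : ℝ) ∧
    (KY * KY).trace = (N : ℝ) ∧
    (KX * KY).trace / Real.sqrt ((KX * KX).trace * (KY * KY).trace)
      = (1 / N : ℝ) * ∑ i, ρ i ^ 2 := by
  rw [← Matrix.mul_smul] at hKX hKY
  have hXX : (1 / M : ℝ) • Xᵀ * X = CX := by rw [hCX, smul_mul]
  have hYY : (1 / M : ℝ) • Yᵀ * Y = CY := by rw [hCY, smul_mul]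
  have hXY : (1 / M : ℝ) • Xᵀ * Y = CXY := by rw [hCXY, smul_mul]
  have hYX : (1 / M : ℝ) • Yᵀ * X = CXYᵀ := by
    rw [hCXY, transpose_smul, transpose_mul, transpose_transpose, smul_mul]
  have hdetX := (isUnit_iff_isUnit_det CX).mp hCXpd.isUnit
  have hdetY := (isUnit_iff_isUnit_det CY).mp hCYpd.isUnit
  have htrKXKX : (KX * KX).trace = N := by
    rw [hKX, trace_mul_self_mul_nonsing_inv_mul hXX hdetX, Fintype.card_fin]
  have htrKYKY : (KY * KY).trace = N := by
    rw [hKY, trace_mul_self_mul_nonsing_inv_mul hYY hdetY, Fintype.card_fin]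
  have hsymm {C : Matrix (Fin N) (Fin N) ℝ} (hC : C.PosSemidef) : hC.sqrt.IsSymm :=
    isHermitian_iff_isSymm.mp (PosSemidef.isHermitian_sqrt hC)
  have htrKXKY : (KX * KY).trace = ∑ i, ρ i ^ 2 := calc
    (KX * KY).trace = (CX⁻¹ * CXY * CY⁻¹ * CXYᵀ).trace := by
      rw [hKX, hKY, trace_mul_mul_mul_mul_mul_mul, hXY, hYX]
    _ = (Φᵀ * Φ).trace := by
      rw [hΦ, trace_transpose_mul_self_nonsing_inv_mul_mul_nonsing_inv (hsymm _) (hsymm _),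
        PosSemidef.sqrt_mul_self, PosSemidef.sqrt_mul_self]
    _ = ∑ i, ρ i ^ 2 := by
      simp [(isHermitian_transpose_mul_self Φ).trace_eq_sum_eigenvalues, hρ]
  refine ⟨htrKXKY, htrKXKX, htrKYKY, ?_⟩
  rw [htrKXKY, htrKXKX, htrKYKY, Real.sqrt_mul_self N.cast_nonneg, one_div, inv_mul_eq_div]

/-- For full-column-rank `X, Y ∈ ℝ^{M×N}` (`N ≤ M`), so that
`C_X = (1/M)XᵀX` and `C_Y = (1/M)YᵀY` are positive definite, with
`K_X = (1/M) X C_X⁻¹ Xᵀ`, `K_Y = (1/M) Y C_Y⁻¹ Yᵀ`, `C_{XY} = (1/M) Xᵀ Y` and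
`Φ = C_X^{-1/2} C_{XY} C_Y^{-1/2}` whose singular values `ρ_i` are the canonical correlations:
`Tr(K_X K_Y) = Σ ρ_i²`, `Tr(K_X²) = Tr(K_Y²) = N`, and hence the normalized similarity equals
the mean squared canonical correlation `(1/N) Σ ρ_i²`. -/
theorem cca_mean_squared_canonical_correlations
    {M N : ℕ} (hMN : N ≤ M)
    (X Y : Matrix (Fin M) (Fin N) ℝ)
    (hrX : X.rank = N) (hrY : Y.rank = N)
    (CX CY : Matrix (Fin N) (Fin N) ℝ)
    (hCX : CX = (1 / M : ℝ) • (Xᵀ * X)) (hCY : CY = (1 / M : ℝ) • (Yᵀ * Y))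
    (hCXpd : CX.PosDef) (hCYpd : CY.PosDef)
    (KX KY : Matrix (Fin M) (Fin M) ℝ)
    (hKX : KX = (1 / M : ℝ) • (X * CX⁻¹ * Xᵀ))
    (hKY : KY = (1 / M : ℝ) • (Y * CY⁻¹ * Yᵀ))
    (CXY : Matrix (Fin N) (Fin N) ℝ) (hCXY : CXY = (1 / M : ℝ) • (Xᵀ * Y))
    (Φ : Matrix (Fin N) (Fin N) ℝ)
    (hΦ : Φ = (hCXpd.posSemidef.sqrt)⁻¹ * CXY * (hCYpd.posSemidef.sqrt)⁻¹)
    (ρ : Fin N → ℝ) (hρ0 : ∀ i, 0 ≤ ρ i)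
    (hρ : ∀ i, ρ i ^ 2 = (Matrix.isHermitian_transpose_mul_self Φ).eigenvalues i) :
    (KX * KY).trace = ∑ i, ρ i ^ 2 ∧
    (KX * KX).trace = (N : ℝ) ∧
    (KY * KY).trace = (N : ℝ) ∧
    (KX * KY).trace / Real.sqrt ((KX * KX).trace * (KY * KY).trace)
      = (1 / N : ℝ) * ∑ i, ρ i ^ 2 :=
  cca_mean_squared_canonical_correlations_general X Y CX CY hCX hCY hCXpd hCYpd KX KY hKX hKY CXY
    hCXY Φ hΦ ρ hρ
end

section
/- Let X ∈ ℝ^{M×N_X} and Y ∈ ℝ^{M×N_Y} be nonzero, set C_X = (1/M)XᵀX, C_Y = (1/M)YᵀY, K_X = (1/M) X ((Tr[C_X²]/Tr[C_X]) · I)⁻¹ Xᵀ and K_Y = (1/M) Y ((Tr[C_Y²]/Tr[C_Y]) · I)⁻¹ Yᵀ. Then Tr(K_X K_Y) = Tr[XXᵀ] Tr[YYᵀ] Tr[XXᵀ YYᵀ] / (Tr[(XXᵀ)²] Tr[(YYᵀ)²]), the Effective Number of Shared Dimensions ENSD(X, Y); in particular Tr(K_X²) = (Tr[XXᵀ])²/Tr[(XXᵀ)²]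 = R(C_X), the participation ratio of C_X. -/
/-!
Since the weight penalty `G` is a multiple of the identity, the kernel is a rescaled Gram
matrix: `K_X = (Tr[XXᵀ] / Tr[(XXᵀ)²]) • XXᵀ`, the factors `1/M` cancelling and `XᵀX`, `XXᵀ`
having the same traces of first and second powers by cyclicity. Expanding `Tr(K_X K_Y)` gives the
ENSD, and `Y = X` gives the participation ratio of `XXᵀ`, which equals that of `C_X` because the
participation ratio is invariant under cyclic permutation and rescaling.
-/

open Matrix

namespace Matrix

variable {m n R : Type*} [Fintype m] [Fintype n] [Field R]

theorem inv_smul_one [DecidableEq n] (c : R) : (c • (1 : Matrix n n R))⁻¹ = c⁻¹ • 1 := by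
  rcases eq_or_ne c 0 with rfl | hc
  · simp
  · exact inv_eq_left_inv (by rw [smul_mul_smul, Matrix.one_mul, inv_mul_cancel₀ hc, one_smul])

theorem trace_mul_mul_self_comm (A : Matrix m n R) (B : Matrix n m R) :
    (A * B * (A * B)).trace = (B * A * (B * A)).trace := by
  rw [Matrix.mul_assoc, trace_mul_comm]
  simp only [Matrix.mul_assoc]

end Matrix

section

variable {m n R : Type*} [Fintype m] [Fintype n] [Field R]

/-- The weight penalty of the paper is `G(X) = penaltyScale C_X • 1`. -/
def penaltyScale (C : Matrix n n R) : R := (C * C).trace / C.trace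

def participationRatio (C : Matrix n n R) : R := C.trace ^ 2 / (C * C).trace

theorem penaltyScale_smul (s : R) (C : Matrix n n R) :
    penaltyScale (s • C) = s * penaltyScale C := by
  rcases eq_or_ne s 0 with rfl | hs
  · simp [penaltyScale]
  · simp only [penaltyScale, smul_mul_smul, trace_smul, smul_eq_mul]
    rw [mul_assoc, mul_div_mul_left _ _ hs, mul_div_assoc]

theorem participationRatio_smul {s : R} (hs : s ≠ 0) (C : Matrix n n R) :
    participationRatio (s • C) = participationRatio C := by
  simp only [participationRatio, smul_mul_smul, trace_smul, smul_eq_mul]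
  rw [mul_pow, sq s, mul_div_mul_left _ _ (mul_ne_zero hs hs)]

theorem penaltyScale_mul_comm (A : Matrix m n R) (B : Matrix n m R) :
    penaltyScale (A * B) = penaltyScale (B * A) := by
  rw [penaltyScale, penaltyScale, trace_mul_mul_self_comm, trace_mul_comm A B]

theorem participationRatio_mul_comm (A : Matrix m n R) (B : Matrix n m R) :
    participationRatio (A * B) = participationRatio (B * A) := by
  rw [participationRatio, participationRatio, trace_mul_mul_self_comm, trace_mul_comm A B]

theorem smul_mul_inv_penaltyScale_mul_transpose [DecidableEq n] (A : Matrix m n R) {s : R}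
    (hs : s ≠ 0) :
    s • (A * (penaltyScale (s • (Aᵀ * A)) • (1 : Matrix n n R))⁻¹ * Aᵀ) =
      (penaltyScale (A * Aᵀ))⁻¹ • (A * Aᵀ) := by
  rw [inv_smul_one, Matrix.mul_smul, Matrix.mul_one, Matrix.smul_mul, smul_smul,
    penaltyScale_smul, penaltyScale_mul_comm, mul_inv, ← mul_assoc, mul_inv_cancel₀ hs, one_mul]

theorem trace_inv_penaltyScale_smul_mul (P Q : Matrix m m R) :
    ((penaltyScale P)⁻¹ • P * ((penaltyScale Q)⁻¹ • Q)).trace =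
      P.trace * Q.trace * (P * Q).trace / ((P * P).trace * (Q * Q).trace) := by
  rw [smul_mul_smul, trace_smul, smul_eq_mul, penaltyScale, penaltyScale, inv_div, inv_div,
    div_mul_div_comm, div_mul_eq_mul_div]

theorem trace_inv_penaltyScale_smul_mul_self (P : Matrix m m R) :
    ((penaltyScale P)⁻¹ • P * ((penaltyScale P)⁻¹ • P)).trace = participationRatio P := by
  rw [trace_inv_penaltyScale_smul_mul, participationRatio, mul_div_assoc, div_self_mul_self',
    ← div_eq_mul_inv, sq]

end

theorem trace_kernel_product_eq_ENSD_general
    {M NX NY : ℕ}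
    (X : Matrix (Fin M) (Fin NX) ℝ) (Y : Matrix (Fin M) (Fin NY) ℝ)
    (CX : Matrix (Fin NX) (Fin NX) ℝ) (hCX : CX = (1 / M : ℝ) • (Xᵀ * X))
    (CY : Matrix (Fin NY) (Fin NY) ℝ) (hCY : CY = (1 / M : ℝ) • (Yᵀ * Y))
    (KX KY : Matrix (Fin M) (Fin M) ℝ)
    (hKX : KX = (1 / M : ℝ) •
      (X * (((CX * CX).trace / CX.trace) • (1 : Matrix (Fin NX) (Fin NX) ℝ))⁻¹ * Xᵀ))
    (hKY : KY = (1 / M : ℝ) •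
      (Y * (((CY * CY).trace / CY.trace) • (1 : Matrix (Fin NY) (Fin NY) ℝ))⁻¹ * Yᵀ)) :
    (KX * KY).trace =
      (X * Xᵀ).trace * (Y * Yᵀ).trace * (X * Xᵀ * (Y * Yᵀ)).trace /
        ((X * Xᵀ * (X * Xᵀ)).trace * (Y * Yᵀ * (Y * Yᵀ)).trace) ∧
    (KX * KX).trace = (X * Xᵀ).trace ^ 2 / (X * Xᵀ * (X * Xᵀ)).trace ∧
    (KX * KX).trace = CX.trace ^ 2 / (CX * CX).trace := by
  -- for `M = 0` the kernels are `0 × 0` matrices and `1 / M = 0` forces `CX = 0`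
  obtain rfl | hM := eq_or_ne M 0
  · simp [hCX]
  have hs : (1 / M : ℝ) ≠ 0 := one_div_ne_zero (Nat.cast_ne_zero.2 hM)
  have hKX' : KX = (penaltyScale (X * Xᵀ))⁻¹ • (X * Xᵀ) := by
    rw [hKX, hCX]
    exact smul_mul_inv_penaltyScale_mul_transpose X hs
  have hKY' : KY = (penaltyScale (Y * Yᵀ))⁻¹ • (Y * Yᵀ) := by
    rw [hKY, hCY]
    exact smul_mul_inv_penaltyScale_mul_transpose Y hs
  have hKXX : (KX * KX).trace = participationRatio (X * Xᵀ) := by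
    rw [hKX', trace_inv_penaltyScale_smul_mul_self]
  refine ⟨?_, hKXX, ?_⟩
  · rw [hKX', hKY', trace_inv_penaltyScale_smul_mul]
  · rw [hKXX, participationRatio_mul_comm, ← participationRatio_smul hs, ← hCX,
      participationRatio]

/-- For nonzero `X ∈ ℝ^{M×N_X}`, `Y ∈ ℝ^{M×N_Y}` with empirical covariances
`C_X = (1/M)XᵀX`, `C_Y = (1/M)YᵀY`, and kernels built from the weight penalty
`G(X) = (Tr[C_X²]/Tr[C_X])·I`, one has
`Tr(K_X K_Y) = Tr[XXᵀ]Tr[YYᵀ]Tr[XXᵀYYᵀ]/(Tr[(XXᵀ)²]Tr[(YYᵀ)²]) = ENSD(X,Y)`;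
in particular `Tr(K_X²) = (Tr[XXᵀ])²/Tr[(XXᵀ)²] = R(C_X)`, the participation ratio of `C_X`. -/
theorem trace_kernel_product_eq_ENSD
    {M NX NY : ℕ}
    (X : Matrix (Fin M) (Fin NX) ℝ) (Y : Matrix (Fin M) (Fin NY) ℝ)
    (hX : X ≠ 0) (hY : Y ≠ 0)
    (CX : Matrix (Fin NX) (Fin NX) ℝ) (hCX : CX = (1 / M : ℝ) • (Xᵀ * X))
    (CY : Matrix (Fin NY) (Fin NY) ℝ) (hCY : CY = (1 / M : ℝ) • (Yᵀ * Y))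
    (KX KY : Matrix (Fin M) (Fin M) ℝ)
    (hKX : KX = (1 / M : ℝ) •
      (X * (((CX * CX).trace / CX.trace) • (1 : Matrix (Fin NX) (Fin NX) ℝ))⁻¹ * Xᵀ))
    (hKY : KY = (1 / M : ℝ) •
      (Y * (((CY * CY).trace / CY.trace) • (1 : Matrix (Fin NY) (Fin NY) ℝ))⁻¹ * Yᵀ)) :
    (KX * KY).trace =
      (X * Xᵀ).trace * (Y * Yᵀ).trace * (X * Xᵀ * (Y * Yᵀ)).trace /
        ((X * Xᵀ * (X * Xᵀ)).trace * (Y * Yᵀ * (Y * Yᵀ)).trace) ∧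
    (KX * KX).trace = (X * Xᵀ).trace ^ 2 / (X * Xᵀ * (X * Xᵀ)).trace ∧
    (KX * KX).trace = CX.trace ^ 2 / (CX * CX).trace :=
  trace_kernel_product_eq_ENSD_general X Y CX hCX CY hCY KX KY hKX hKY
end

section
/- Let K_X and K_Y be real symmetric positive semidefinite M×M matrices with Tr K_X = Tr K_Y and K_X ≠ K_Y. Then the participation ratio of their difference satisfies R(K_X − K_Y) ≥ 2, where R(A) = ‖A‖_*² / ‖A‖_F² with ‖A‖_* the nuclear norm (sum of singular values) and ‖A‖_F the Frobenius norm. -/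
/-!
For symmetric `A` the singular values are the `|λᵢ|`, so `‖A‖_* = ∑ |λᵢ|` and `‖A‖_F² = ∑ λᵢ²`.
With `P = ∑ λᵢ⁺` and `N = ∑ λᵢ⁻` we have `∑ λᵢ² ≤ P² + N²`, `∑ |λᵢ| = P + N` and `tr A = P - N`,
hence `2 ∑ λᵢ² ≤ (P + N)² + (P - N)² = ‖A‖_*² + (tr A)²`, and the trace vanishes here.
-/

open Matrix

/-- The nuclear norm (sum of singular values) of a real matrix, where the singular values are
the square roots of the eigenvalues of `Aᵀ A`. -/
noncomputable def nuclearNorm {m n : Type*} [Fintype m] [Fintype n] [DecidableEq n]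
    (A : Matrix m n ℝ) : ℝ :=
  ∑ i, Real.sqrt ((Matrix.isHermitian_conjTranspose_mul_self A).eigenvalues i)

/-- The squared Frobenius norm of a real matrix. -/
def frobSq {m n : Type*} [Fintype m] [Fintype n] (A : Matrix m n ℝ) : ℝ :=
  ∑ i, ∑ j, A i j ^ 2

theorem Finset.two_mul_sum_sq_le_sq_sum_abs_add_sq_sum {ι : Type*} (s : Finset ι) (f : ι → ℝ) :
    2 * ∑ i ∈ s, f i ^ 2 ≤ (∑ i ∈ s, |f i|) ^ 2 + (∑ i ∈ s, f i) ^ 2 := by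
  have hsq (a : ℝ) : a ^ 2 = a⁺ ^ 2 + a⁻ ^ 2 := by
    rcases le_total 0 a with h | h <;> simp [h]
  have habs : ∑ i ∈ s, |f i| = ∑ i ∈ s, (f i)⁺ + ∑ i ∈ s, (f i)⁻ := by
    simp only [← posPart_add_negPart, Finset.sum_add_distrib]
  have hsum : ∑ i ∈ s, f i = ∑ i ∈ s, (f i)⁺ - ∑ i ∈ s, (f i)⁻ := by
    simp only [← Finset.sum_sub_distrib, posPart_sub_negPart]
  have hpos := Finset.sum_sq_le_sq_sum_of_nonneg (s := s) fun i _ => posPart_nonneg (f i)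
  have hneg := Finset.sum_sq_le_sq_sum_of_nonneg (s := s) fun i _ => negPart_nonneg (f i)
  rw [habs, hsum, Finset.sum_congr rfl fun i _ => hsq (f i), Finset.sum_add_distrib]
  nlinarith

theorem frobSq_eq_trace_conjTranspose_mul_self {m n : Type*} [Fintype m] [Fintype n]
    (A : Matrix m n ℝ) : frobSq A = (Aᴴ * A).trace := by
  simp only [frobSq, trace, diag_apply, mul_apply, conjTranspose_apply, star_trivial, sq]
  exact Finset.sum_comm

theorem frobSq_pos {m n : Type*} [Fintype m] [Fintype n] {A : Matrix m n ℝ} (hA : A ≠ 0) :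
    0 < frobSq A := by
  obtain ⟨i, j, hij⟩ : ∃ i j, A i j ≠ 0 := by
    by_contra! h
    exact hA (ext h)
  exact Finset.sum_pos' (fun i _ => Finset.sum_nonneg fun j _ => sq_nonneg _)
    ⟨i, Finset.mem_univ _, Finset.sum_pos' (fun j _ => sq_nonneg _)
      ⟨j, Finset.mem_univ _, by positivity⟩⟩

namespace Matrix.IsHermitian

variable {n : Type*} [Fintype n] [DecidableEq n]

section RCLike

variable {𝕜 : Type*} [RCLike 𝕜] {A : Matrix n n 𝕜}

theorem eigenvalues_conjTranspose_mul_self (hA : A.IsHermitian) :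
    Finset.univ.val.map (isHermitian_conjTranspose_mul_self A).eigenvalues =
      Finset.univ.val.map fun i => hA.eigenvalues i ^ 2 := by
  have hsq : Aᴴ * A = cfc (· ^ 2 : ℝ → ℝ) A := by
    rw [cfc_pow_id A 2 hA.isSelfAdjoint, hA.eq, sq]
  have hroots := congrArg Polynomial.roots (congrArg charpoly hsq)
  rw [(isHermitian_conjTranspose_mul_self A).roots_charpoly_eq_eigenvalues, hA.charpoly_cfc_eq,
    Polynomial.roots_prod _ _ <| Finset.prod_ne_zero_iff.mpr fun i _ =>
      Polynomial.X_sub_C_ne_zero _] at hroots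
  simp_rw [Polynomial.roots_X_sub_C, Multiset.bind_singleton] at hroots
  apply Multiset.map_injective (RCLike.ofReal_injective (K := 𝕜))
  rw [Multiset.map_map, Multiset.map_map]
  exact hroots

theorem sum_comp_eigenvalues_conjTranspose_mul_self (hA : A.IsHermitian) (g : ℝ → ℝ) :
    ∑ i, g ((isHermitian_conjTranspose_mul_self A).eigenvalues i) =
      ∑ i, g (hA.eigenvalues i ^ 2) := by
  have h := congrArg (fun s => (s.map g).sum) hA.eigenvalues_conjTranspose_mul_self
  simp only [Multiset.map_map] at h
  exact h

end RCLike

variable {A : Matrix n n ℝ}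

theorem nuclearNorm_eq_sum_abs_eigenvalues (hA : A.IsHermitian) :
    nuclearNorm A = ∑ i, |hA.eigenvalues i| := by
  simp only [nuclearNorm, hA.sum_comp_eigenvalues_conjTranspose_mul_self, Real.sqrt_sq_eq_abs]

theorem frobSq_eq_sum_sq_eigenvalues (hA : A.IsHermitian) :
    frobSq A = ∑ i, hA.eigenvalues i ^ 2 := by
  rw [frobSq_eq_trace_conjTranspose_mul_self,
    (isHermitian_conjTranspose_mul_self A).trace_eq_sum_eigenvalues]
  exact hA.sum_comp_eigenvalues_conjTranspose_mul_self id

end Matrix.IsHermitian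

/-- For real symmetric positive semidefinite `M × M` matrices `K_X ≠ K_Y`
with equal traces, the participation ratio `R(K_X − K_Y) = ‖K_X − K_Y‖_*²/‖K_X − K_Y‖_F²`
is at least `2`. -/
theorem participation_ratio_traceless_difference_ge_two
    {M : ℕ} (KX KY : Matrix (Fin M) (Fin M) ℝ)
    (hX : KX.PosSemidef) (hY : KY.PosSemidef)
    (htr : KX.trace = KY.trace) (hne : KX ≠ KY) :
    2 ≤ nuclearNorm (KX - KY) ^ 2 / frobSq (KX - KY) := by
  have hA : (KX - KY).IsHermitian := hX.1.sub hY.1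
  have htraceless : ∑ i, hA.eigenvalues i = 0 := by
    simpa [trace_sub, htr] using hA.trace_eq_sum_eigenvalues.symm
  rw [le_div_iff₀ (frobSq_pos (sub_ne_zero.mpr hne)), hA.nuclearNorm_eq_sum_abs_eigenvalues,
    hA.frobSq_eq_sum_sq_eigenvalues]
  simpa [htraceless] using Finset.two_mul_sum_sq_le_sq_sum_abs_add_sq_sum Finset.univ hA.eigenvalues
end
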